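/- Suppose L : Ω × ℝ^N × ℝ^{N×n} → ℝ satisfies the sublevel condition: max_{η ∈ ∂C} L(x, η, P) ≤ inf_{η ∈ ℝ^N∖C} L(x, η, P) + l(x) for a.e. x and all P, with l ∈ L¹(Ω), l ≥ 0, and C compact convex. Let P^C be the metric projection onto C. Then for any measurable v : Ω → ℝ^N and matrix field G, a.e. on the set {x : v(x) ∉ C} one has L(x, P^C(v(x)), G(x)) ≤ L(x, v(x), G(x)) + l(x), and on {v ∈ C} one has L(x, P^C(v(x)), G(x)) = L(x, v(x), G(x)). -/
import Mathlib


open MeasureTheory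

/-- Under the sublevel condition (values of L(x,·,P) outside C almost exceed
those on ∂C), projecting the middle argument onto C almost decreases the
integrand up to the error l, and leaves it unchanged inside C. -/
theorem stmt18 {n N : ℕ} (Ω : Set (EuclideanSpace ℝ (Fin n))) (hΩ : IsOpen Ω)
    (C : Set (EuclideanSpace ℝ (Fin N))) (hcomp : IsCompact C)
    (hconv : Convex ℝ C) (h0 : (0 : EuclideanSpace ℝ (Fin N)) ∈ interior C)
    (L : EuclideanSpace ℝ (Fin n) → EuclideanSpace ℝ (Fin N) →
      (EuclideanSpace ℝ (Fin n) →L[ℝ] EuclideanSpace ℝ (Fin N)) → ℝ)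
    (l : EuclideanSpace ℝ (Fin n) → ℝ) (hl0 : ∀ x, 0 ≤ l x)
    (hl : Integrable l (volume.restrict Ω))
    (hsub : ∀ᵐ x ∂(volume.restrict Ω),
      ∀ P : EuclideanSpace ℝ (Fin n) →L[ℝ] EuclideanSpace ℝ (Fin N),
        ∀ η ∈ frontier C, ∀ η' ∉ C, L x η P ≤ L x η' P + l x)
    (PC : EuclideanSpace ℝ (Fin N) → EuclideanSpace ℝ (Fin N))
    (hPCmem : ∀ y, PC y ∈ C) (hPCmin : ∀ y, ∀ w ∈ C, ‖y - PC y‖ ≤ ‖y - w‖)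
    (v : EuclideanSpace ℝ (Fin n) → EuclideanSpace ℝ (Fin N))
    (G : EuclideanSpace ℝ (Fin n) →
      (EuclideanSpace ℝ (Fin n) →L[ℝ] EuclideanSpace ℝ (Fin N))) :
    ∀ᵐ x ∂(volume.restrict Ω),
      (v x ∉ C → L x (PC (v x)) (G x) ≤ L x (v x) (G x) + l x) ∧
      (v x ∈ C → L x (PC (v x)) (G x) = L x (v x) (G x)) := by
  -- PC fixes points of C
  have hfix : ∀ y ∈ C, PC y = y := by
    intro y hy
    have h := hPCmin y y hy
    simp only [sub_self, norm_zero] at h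
    have h0' : ‖y - PC y‖ = 0 := le_antisymm h (norm_nonneg _)
    exact (sub_eq_zero.mp (norm_eq_zero.mp h0')).symm
  -- PC maps points outside C to the frontier
  have hfront : ∀ y, y ∉ C → PC y ∈ frontier C := by
    intro y hy
    have hmem := hPCmem y
    have hclosed : IsClosed C := hcomp.isClosed
    rw [hclosed.frontier_eq]
    refine ⟨hmem, ?_⟩
    intro hint
    obtain ⟨ε, hε, hball⟩ := Metric.isOpen_iff.mp isOpen_interior _ hint
    have hd : 0 < ‖y - PC y‖ := by
      rw [norm_pos_iff, sub_ne_zero]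
      intro h; exact hy (h ▸ hmem)
    set d := ‖y - PC y‖ with hdd
    set t : ℝ := min (1/2) (ε / (2 * d)) with htdef
    have ht0 : 0 < t := lt_min (by norm_num) (by positivity)
    have ht1 : t < 1 := lt_of_le_of_lt (min_le_left _ _) (by norm_num)
    set w := PC y + t • (y - PC y) with hwdef
    have hwball : ‖w - PC y‖ = t * d := by
      rw [hwdef, add_sub_cancel_left, norm_smul, Real.norm_eq_abs,
        abs_of_pos ht0]
    have htd : t * d < ε := by
      have h1 : t ≤ ε / (2 * d) := min_le_right _ _
      have : t * d ≤ (ε / (2 * d)) * d := by nlinarith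
      calc t * d ≤ (ε / (2 * d)) * d := this
        _ = ε / 2 := by field_simp
        _ < ε := by linarith
    have hwC : w ∈ C := interior_subset (hball (by
      rw [Metric.mem_ball, dist_eq_norm, hwball]; exact htd))
    have hmin := hPCmin y w hwC
    have hyw : ‖y - w‖ = (1 - t) * d := by
      have : y - w = (1 - t) • (y - PC y) := by
        rw [hwdef]; module
      rw [this, norm_smul, Real.norm_eq_abs, abs_of_pos (by linarith)]
    rw [hyw] at hmin
    nlinarith
  filter_upwards [hsub] with x hx
  constructor
  · intro hv
    exact hx (G x) _ (hfront _ hv) _ hv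
  · intro hv
    rw [hfix _ hv]
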